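/- arXiv:1806.07529 — 6 statements merged into one kernel-verified Lean document; each statement's English description precedes it below -/
import Mathlib

section
/- Let A be a D×N real matrix, g₀ ∈ ℝ^D, and suppose the r largest singular values of A are all at least σ > 0 (equivalently, there is an r-dimensional subspace V ⊆ ℝ^N with ‖Av‖ ≥ σ‖v‖ for all v ∈ V). Then for all L, ε, a > 0: (i) the Lebesgue measure of the set {c ∈ ℝ^N : ‖Ac + g₀‖ ≤ Lε and ‖c‖ ≤ a} is at most 2^N L^r ε^r a^{N−r} / σ^r; and (ii) the probability of {c : ‖Ac + g₀‖ ≤ Lε} relative to the ball {c : ‖c‖ ≤ a} is at most N! L^r ε^r / (σ^r a^r). -/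
/-!
The orthogonal splitting `ℝᴺ ≃ V × Vᗮ`, `(v, w) ↦ v + w`, preserves volume. Two points of the set
lying over the same `w ∈ Vᗮ` differ by a vector of `V`, so the lower bound `σ` on `V` gives the
fibre diameter at most `2Lε/σ`; in orthonormal coordinates a set of diameter `δ` lies in a cube of
side `δ`, so each fibre has volume at most `(2Lε/σ)ʳ`. Fibres are empty unless `‖w‖ ≤ a`, and that
ball of `Vᗮ` has volume at most `(2a)ᴺ⁻ʳ`. For the relative bound, the Euclidean ball of radius
`a` contains the `ℓ¹` ball, whose volume is `(2a)ᴺ / N!`.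
-/

open MeasureTheory Metric Module Nat

theorem InnerProductSpace.volume_le_ediam_pow {F : Type*} [NormedAddCommGroup F]
    [InnerProductSpace ℝ F] [FiniteDimensional ℝ F] [MeasurableSpace F] [BorelSpace F]
    (s : Set F) : volume s ≤ ediam s ^ finrank ℝ F := by
  let b := stdOrthonormalBasis ℝ F
  let e := b.measurableEquiv.trans (MeasurableEquiv.toLp 2 (Fin (finrank ℝ F) → ℝ)).symm
  have he : MeasurePreserving e :=
    (EuclideanSpace.volume_preserving_symm_measurableEquiv_toLp _).comp
      b.measurePreserving_measurableEquiv
  have he_lip : LipschitzWith (1 * 1) e :=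
    (PiLp.lipschitzWith_ofLp 2 _).comp b.repr.isometry.lipschitz
  calc volume s = volume (e '' s) := by
        rw [← he.symm.measure_preimage_equiv, MeasurableEquiv.image_eq_preimage_symm]
    _ ≤ ediam (e '' s) ^ finrank ℝ F := by
        simpa using Real.volume_pi_le_diam_pow (e '' s)
    _ ≤ ediam s ^ finrank ℝ F := by
        gcongr
        simpa using he_lip.ediam_image_le s

theorem MeasureTheory.Measure.prod_apply_le_mul_of_slice_le {α β : Type*} [MeasurableSpace α]
    [MeasurableSpace β] {μ : Measure α} {ν : Measure β} [SFinite μ] [SFinite ν]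
    {s : Set (α × β)} (hs : MeasurableSet s) {t : Set β} (ht : MeasurableSet t)
    (hst : ∀ p ∈ s, p.2 ∈ t) {C : ENNReal} (hC : ∀ y, μ ((·, y) ⁻¹' s) ≤ C) :
    μ.prod ν s ≤ C * ν t := by
  rw [Measure.prod_apply_symm hs, ← lintegral_indicator_const ht]
  refine lintegral_mono fun y ↦ ?_
  by_cases hy : y ∈ t
  · simpa [hy] using hC y
  · have : (·, y) ⁻¹' s = ∅ := Set.eq_empty_of_forall_notMem fun x hx ↦ hy (hst _ hx)
    simp [this]

theorem Submodule.norm_le_norm_add_of_mem_orthogonal {E : Type*} [NormedAddCommGroup E]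
    [InnerProductSpace ℝ E] {V : Submodule ℝ E} {v w : E} (hv : v ∈ V) (hw : w ∈ Vᗮ) :
    ‖w‖ ≤ ‖v + w‖ := by
  have := norm_add_sq_eq_norm_sq_add_norm_sq_real (V.inner_right_of_mem_orthogonal hv hw)
  nlinarith [norm_nonneg w, norm_nonneg (v + w), sq_nonneg ‖v‖]

theorem Submodule.volume_le_of_forall_sub_mem {E : Type*} [NormedAddCommGroup E]
    [InnerProductSpace ℝ E] [FiniteDimensional ℝ E] [MeasurableSpace E] [BorelSpace E]
    (V : Submodule ℝ E) {S : Set E} (hS : MeasurableSet S) {d a : ℝ}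
    (hd : ∀ c ∈ S, ∀ c' ∈ S, c - c' ∈ V → ‖c - c'‖ ≤ d) (ha : ∀ c ∈ S, ‖c‖ ≤ a) :
    volume S ≤ ENNReal.ofReal d ^ finrank ℝ V * ENNReal.ofReal (2 * a) ^ finrank ℝ Vᗮ := by
  let G : V × Vᗮ → E := fun p ↦ p.1 + p.2
  have hG : MeasurePreserving G :=
    V.orthogonalDecomposition.symm.measurePreserving.comp (WithLp.volume_preserving_toLp V Vᗮ)
  have hball : ediam (closedBall (0 : Vᗮ) a) ≤ ENNReal.ofReal (2 * a) :=
    ediam_le_of_forall_dist_le fun x hx y hy ↦ by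
      rw [mem_closedBall] at hx hy
      linarith [dist_triangle_right x y 0]
  rw [← hG.measure_preimage hS.nullMeasurableSet, Measure.volume_eq_prod]
  calc volume.prod volume (G ⁻¹' S)
      ≤ ENNReal.ofReal d ^ finrank ℝ V * volume (closedBall (0 : Vᗮ) a) := by
        refine Measure.prod_apply_le_mul_of_slice_le (hS.preimage hG.measurable)
          measurableSet_closedBall (fun p hp ↦ ?_) fun w ↦ ?_
        · rw [mem_closedBall_zero_iff]
          exact (norm_le_norm_add_of_mem_orthogonal p.1.2 p.2.2).trans (ha _ hp)
        · refine (InnerProductSpace.volume_le_ediam_pow _).trans (pow_le_pow_left' ?_ _)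
          refine ediam_le_of_forall_dist_le fun v hv v' hv' ↦ ?_
          have hsub : G (v, w) - G (v', w) = v - v' := add_sub_add_right_eq_sub _ _ _
          rw [dist_eq_norm, ← norm_coe, Submodule.coe_sub, ← hsub]
          exact hd _ hv _ hv' (hsub ▸ sub_mem v.2 v'.2)
    _ ≤ ENNReal.ofReal d ^ finrank ℝ V * ENNReal.ofReal (2 * a) ^ finrank ℝ Vᗮ := by
        gcongr
        exact (InnerProductSpace.volume_le_ediam_pow _).trans (pow_le_pow_left' hball _)

theorem LinearMap.volume_setOf_norm_add_le_and_norm_le_le {E F : Type*} [NormedAddCommGroup E]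
    [InnerProductSpace ℝ E] [FiniteDimensional ℝ E] [MeasurableSpace E] [BorelSpace E]
    [NormedAddCommGroup F] [NormedSpace ℝ F] (T : E →ₗ[ℝ] F) (g : F) {V : Submodule ℝ E}
    {σ : ℝ} (hσ : 0 < σ) (hV : ∀ v ∈ V, σ * ‖v‖ ≤ ‖T v‖) (ρ a : ℝ) :
    volume {c | ‖T c + g‖ ≤ ρ ∧ ‖c‖ ≤ a} ≤
      ENNReal.ofReal (2 * ρ / σ) ^ finrank ℝ V *
        ENNReal.ofReal (2 * a) ^ (finrank ℝ E - finrank ℝ V) := by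
  have hT : Continuous T := T.continuous_of_finiteDimensional
  rw [← V.finrank_add_finrank_orthogonal, Nat.add_sub_cancel_left]
  refine V.volume_le_of_forall_sub_mem ?_ (fun c hc c' hc' hcc' ↦ ?_) fun c hc ↦ hc.2
  · exact ((isClosed_le (hT.add continuous_const).norm continuous_const).inter
      (isClosed_le continuous_norm continuous_const)).measurableSet
  rw [le_div_iff₀' hσ]
  calc σ * ‖c - c'‖ ≤ ‖T (c - c')‖ := hV _ hcc'
    _ = ‖(T c + g) - (T c' + g)‖ := by rw [map_sub, add_sub_add_right_eq_sub]
    _ ≤ ‖T c + g‖ + ‖T c' + g‖ := norm_sub_le _ _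
    _ ≤ 2 * ρ := by linarith [hc.1, hc'.1]

theorem EuclideanSpace.norm_le_sum_abs {ι : Type*} [Fintype ι] (x : EuclideanSpace ℝ ι) :
    ‖x‖ ≤ ∑ i, |x i| := by
  rw [EuclideanSpace.norm_eq, Real.sqrt_le_left (Finset.sum_nonneg fun i _ ↦ abs_nonneg _)]
  simpa only [Real.norm_eq_abs] using
    Finset.sum_sq_le_sq_sum_of_nonneg (s := Finset.univ) fun i _ ↦ abs_nonneg (x i)

theorem EuclideanSpace.ofReal_le_volume_closedBall (ι : Type*) [Fintype ι] {a : ℝ}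
    (ha : 0 ≤ a) :
    ENNReal.ofReal a ^ Fintype.card ι * ENNReal.ofReal (2 ^ Fintype.card ι / (Fintype.card ι)!) ≤
      volume (closedBall (0 : EuclideanSpace ℝ ι) a) := by
  rcases isEmpty_or_nonempty ι with hι | hι
  · simp [volume_euclideanSpace_eq_dirac, ha]
  have hcross := volume_sum_rpow_le (ι := ι) le_rfl a
  simp only [Real.rpow_one, div_one, one_add_one_eq_two, Real.Gamma_two, mul_one,
    Real.Gamma_nat_eq_factorial] at hcross
  rw [← (PiLp.volume_preserving_toLp ι).measure_preimage measurableSet_closedBall.nullMeasurableSet,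
    ← hcross]
  refine measure_mono fun x hx ↦ ?_
  rw [Set.mem_preimage, mem_closedBall_zero_iff]
  exact (norm_le_sum_abs _).trans hx

/-- Transfer of volume lemma (Sauer–Yorke–Casdagli). If the `r` largest singular values of
the `D × N` matrix `A` are at least `σ > 0` (equivalently, there is an `r`-dimensional
subspace on which `‖Av‖ ≥ σ‖v‖`), then the set where `‖Ac + g₀‖ ≤ Lε` and `‖c‖ ≤ a`
has small measure, and correspondingly small probability relative to the ball of radius `a`. -/
theorem stmt0 (D N r : ℕ) (A : Matrix (Fin D) (Fin N) ℝ)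
    (g₀ : EuclideanSpace ℝ (Fin D)) (σ : ℝ) (hσ : 0 < σ)
    (hA : ∃ V : Submodule ℝ (EuclideanSpace ℝ (Fin N)),
      Module.finrank ℝ V = r ∧ ∀ v ∈ V, σ * ‖v‖ ≤ ‖Matrix.toEuclideanLin A v‖)
    (L ε a : ℝ) (hL : 0 < L) (hε : 0 < ε) (ha : 0 < a) :
    volume {c : EuclideanSpace ℝ (Fin N) |
        ‖Matrix.toEuclideanLin A c + g₀‖ ≤ L * ε ∧ ‖c‖ ≤ a}
      ≤ ENNReal.ofReal (2 ^ N * L ^ r * ε ^ r * a ^ (N - r) / σ ^ r) ∧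
    volume ({c : EuclideanSpace ℝ (Fin N) | ‖Matrix.toEuclideanLin A c + g₀‖ ≤ L * ε}
        ∩ closedBall 0 a) / volume (closedBall (0 : EuclideanSpace ℝ (Fin N)) a)
      ≤ ENNReal.ofReal ((N.factorial : ℝ) * L ^ r * ε ^ r / (σ ^ r * a ^ r)) := by
  obtain ⟨V, hVr, hV⟩ := hA
  have hrN : r ≤ N := hVr ▸ V.finrank_le.trans_eq (finrank_euclideanSpace_fin)
  have hvol := (Matrix.toEuclideanLin A).volume_setOf_norm_add_le_and_norm_le_le g₀ hσ hV (L * ε) a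
  rw [hVr, finrank_euclideanSpace_fin, ← ENNReal.ofReal_pow (by positivity),
    ← ENNReal.ofReal_pow (by positivity), ← ENNReal.ofReal_mul (by positivity)] at hvol
  have hmain : volume {c : EuclideanSpace ℝ (Fin N) |
      ‖Matrix.toEuclideanLin A c + g₀‖ ≤ L * ε ∧ ‖c‖ ≤ a}
      ≤ ENNReal.ofReal (2 ^ N * L ^ r * ε ^ r * a ^ (N - r) / σ ^ r) := by
    refine hvol.trans_eq (congrArg _ ?_)
    rw [div_pow, ← pow_mul_pow_sub (2 : ℝ) hrN]
    field_simp
    ring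
  refine ⟨hmain, ENNReal.div_le_of_le_mul ?_⟩
  calc volume ({c : EuclideanSpace ℝ (Fin N) | ‖Matrix.toEuclideanLin A c + g₀‖ ≤ L * ε}
        ∩ closedBall 0 a) ≤ ENNReal.ofReal (2 ^ N * L ^ r * ε ^ r * a ^ (N - r) / σ ^ r) := by
        convert hmain using 3
        ext c
        simp only [Set.mem_inter_iff, Set.mem_ofPred_eq, mem_closedBall_zero_iff]
    _ = ENNReal.ofReal ((N.factorial : ℝ) * L ^ r * ε ^ r / (σ ^ r * a ^ r)) *
          (ENNReal.ofReal a ^ N * ENNReal.ofReal (2 ^ N / N !)) := by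
        rw [← ENNReal.ofReal_pow ha.le, ← ENNReal.ofReal_mul (by positivity),
          ← ENNReal.ofReal_mul (by positivity), ← pow_mul_pow_sub a hrN]
        congr 1
        field_simp
    _ ≤ _ := by
        gcongr
        simpa using EuclideanSpace.ofReal_le_volume_closedBall (Fin N) ha.le
end

section
/- Let z₁, …, z_{D'} be distinct points in ℝ^d and let D⁺ ≥ D' − 1. Then the multivariate Vandermonde matrix with D' rows, whose entry in row i and column α is p_α(z_i) for α ranging over I_{D⁺}, has rank equal to D' (the number of its rows). -/
/-- The monomial `p_α(z) = z^α = ∏ i, (z i)^(α i)`. -/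
def pMon {d : ℕ} (α : Fin d → ℕ) (z : Fin d → ℝ) : ℝ := ∏ i, z i ^ α i

/-- The multivariate Vandermonde matrix at distinct points `z₁, …, z_{D'}`, with columns
indexed by multi-indices `α` with `|α| ≤ D⁺`, has rank equal to the number `D'` of its rows
(i.e., its rows are linearly independent), provided `D⁺ ≥ D' - 1`. -/
theorem stmt2 (d D' Dplus : ℕ) (hD : D' - 1 ≤ Dplus)
    (z : Fin D' → (Fin d → ℝ)) (hz : Function.Injective z) :
    LinearIndependent ℝ (fun i : Fin D' =>
      fun α : {α : Fin d → ℕ // (∑ j, α j) ≤ Dplus} => pMon α.1 (z i)) := by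
  rw [Fintype.linearIndependent_iff]
  intro g hg i₀
  have hα : ∀ α : {α : Fin d → ℕ // (∑ j, α j) ≤ Dplus},
      ∑ i, g i * pMon α.1 (z i) = 0 := by
    intro α
    have := congrFun hg α
    simpa [Finset.sum_apply] using this
  classical
  have hex : ∀ j : Fin D', j ≠ i₀ → ∃ m : Fin d, z i₀ m ≠ z j m := by
    intro j hj
    exact Function.ne_iff.mp (fun h => hj (hz h).symm)
  set f : Fin D' → MvPolynomial (Fin d) ℝ := fun j =>
    if h : j = i₀ then 1
    else MvPolynomial.X (hex j h).choose - MvPolynomial.C (z j (hex j h).choose) with hf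
  set P : MvPolynomial (Fin d) ℝ := ∏ j ∈ Finset.univ.erase i₀, f j with hP
  have hdeg : P.totalDegree ≤ Dplus := by
    refine le_trans (MvPolynomial.totalDegree_finset_prod _ _) (le_trans ?_ hD)
    calc ∑ j ∈ Finset.univ.erase i₀, (f j).totalDegree
        ≤ ∑ _j ∈ Finset.univ.erase i₀, 1 := by
          refine Finset.sum_le_sum ?_
          intro j hj
          have hj' : j ≠ i₀ := Finset.ne_of_mem_erase hj
          have hrw : f j = MvPolynomial.X (hex j hj').choose
              + MvPolynomial.C (-(z j (hex j hj').choose)) := by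
            simp [hf, dif_neg hj', sub_eq_add_neg]
          rw [hrw]
          refine le_trans (MvPolynomial.totalDegree_add _ _) ?_
          simp [MvPolynomial.totalDegree_X]
      _ = D' - 1 := by
          simp [Finset.card_erase_of_mem]
  have hev0 : ∀ i, i ≠ i₀ → MvPolynomial.eval (z i) P = 0 := by
    intro i hi
    rw [hP, map_prod]
    apply Finset.prod_eq_zero (Finset.mem_erase.mpr ⟨hi, Finset.mem_univ i⟩)
    simp [hf, dif_neg hi]
  have hev1 : MvPolynomial.eval (z i₀) P ≠ 0 := by
    rw [hP, map_prod]
    refine Finset.prod_ne_zero_iff.mpr ?_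
    intro j hj
    have hj' := Finset.ne_of_mem_erase hj
    simp only [hf, dif_neg hj', map_sub, MvPolynomial.eval_X, MvPolynomial.eval_C]
    exact sub_ne_zero_of_ne (hex j hj').choose_spec
  have hsum : ∑ i, g i * MvPolynomial.eval (z i) P = 0 := by
    have heval : ∀ i, MvPolynomial.eval (z i) P
        = ∑ m ∈ P.support, P.coeff m * ∏ j, z i j ^ m j :=
      fun i => MvPolynomial.eval_eq' _ _
    simp_rw [heval, Finset.mul_sum]
    rw [Finset.sum_comm]
    refine Finset.sum_eq_zero fun m hm => ?_
    have hmle : ∑ j, m j ≤ Dplus := by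
      have h1 := MvPolynomial.le_totalDegree hm
      have h2 : (m.sum fun _ e => e) = ∑ j, m j :=
        Finsupp.sum_fintype _ _ (fun _ => rfl)
      omega
    have hkey := hα ⟨fun j => m j, hmle⟩
    simp only [pMon] at hkey
    calc ∑ i, g i * (P.coeff m * ∏ j, z i j ^ m j)
        = P.coeff m * ∑ i, g i * ∏ j, z i j ^ m j := by
          rw [Finset.mul_sum]; exact Finset.sum_congr rfl fun i _ => by ring
      _ = 0 := by rw [hkey, mul_zero]
  rw [Finset.sum_eq_single i₀ (fun i _ hi => by rw [hev0 i hi, mul_zero])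
    (fun h => absurd (Finset.mem_univ i₀) h)] at hsum
  exact (mul_eq_zero.mp hsum).resolve_right hev1
end

section
/- Let z₁, …, z_{D'} be distinct points in ℝ^d and let D⁺ ≥ D'. Then the incomplete Hermite matrix with dD' rows, whose rows are indexed by pairs (i, l) with 1 ≤ i ≤ D' and 1 ≤ l ≤ d, and whose entry in row (i, l) and column α is the l-th component of the gradient ∇p_α(z_i), for α ranging over I_{D⁺}, has rank equal to dD' (the number of its rows). -/
open MvPolynomial Finset

section Helpers

lemma hasFDerivAt_pMon {d : ℕ} (α : Fin d → ℕ) (x : Fin d → ℝ) :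
    HasFDerivAt (pMon α) (∑ i, ((∏ j ∈ Finset.univ.erase i, x j ^ α j) •
      ((α i : ℝ) * x i ^ (α i - 1)) • (ContinuousLinearMap.proj i :
        (Fin d → ℝ) →L[ℝ] ℝ))) x := by
  have h : ∀ i ∈ Finset.univ (α := Fin d), HasFDerivAt (fun x : Fin d → ℝ => x i ^ α i)
      (((α i : ℝ) * x i ^ (α i - 1)) • (ContinuousLinearMap.proj i : (Fin d → ℝ) →L[ℝ] ℝ)) x := by
    intro i _
    have h1 : HasDerivAt (fun t : ℝ => t ^ α i) ((α i : ℝ) * x i ^ (α i - 1)) (x i) :=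
      hasDerivAt_pow _ _
    have h2 : HasFDerivAt (fun x : Fin d → ℝ => x i)
        (ContinuousLinearMap.proj i : (Fin d → ℝ) →L[ℝ] ℝ) x :=
      (ContinuousLinearMap.proj i : (Fin d → ℝ) →L[ℝ] ℝ).hasFDerivAt
    exact h1.comp_hasFDerivAt x h2
  exact HasFDerivAt.finset_prod h

lemma fderiv_pMon_single {d : ℕ} (α : Fin d → ℕ) (x : Fin d → ℝ) (l : Fin d) :
    fderiv ℝ (pMon α) x (Pi.single l 1) =
      (∏ j ∈ Finset.univ.erase l, x j ^ α j) * ((α l : ℝ) * x l ^ (α l - 1)) := by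
  rw [(hasFDerivAt_pMon α x).fderiv]
  rw [ContinuousLinearMap.sum_apply]
  rw [Finset.sum_eq_single l]
  · simp [Pi.single_apply]
  · intro b _ hb
    simp [Pi.single_apply, hb.symm]
  · simp

lemma aeval_pderiv_monomial {d : ℕ} (m : Fin d →₀ ℕ) (x : Fin d → ℝ) (l : Fin d) :
    aeval x (pderiv l (monomial m (1 : ℝ))) = fderiv ℝ (pMon ⇑m) x (Pi.single l 1) := by
  classical
  rw [fderiv_pMon_single]
  rw [pderiv_monomial, aeval_monomial, one_mul]
  rw [Finsupp.prod_fintype _ _ (fun j => pow_zero (x j))]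
  rcases Nat.eq_zero_or_pos (m l) with h | h
  · simp [h]
  · rw [← Finset.mul_prod_erase Finset.univ _ (Finset.mem_univ l)]
    have h1 : ∀ j ∈ Finset.univ.erase l,
        x j ^ ((m - Finsupp.single l 1 : Fin d →₀ ℕ) j) = x j ^ m j := by
      intro j hj
      rw [Finsupp.tsub_apply, Finsupp.single_apply, if_neg (Finset.ne_of_mem_erase hj).symm]
      simp
    rw [Finset.prod_congr rfl h1]
    have h2 : (m - Finsupp.single l 1 : Fin d →₀ ℕ) l = m l - 1 := by
      rw [Finsupp.tsub_apply, Finsupp.single_apply, if_pos rfl]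
    rw [h2]
    simp only [Algebra.algebraMap_self, map_id, id_eq, RingHom.id_apply]
    ring

noncomputable def antider (r : Polynomial ℝ) : Polynomial ℝ :=
  ∑ k ∈ Finset.range (r.natDegree + 1),
    Polynomial.C (r.coeff k / (k + 1)) * Polynomial.X ^ (k + 1)

lemma derivative_antider (r : Polynomial ℝ) : Polynomial.derivative (antider r) = r := by
  rw [antider, map_sum]
  have h : ∀ k ∈ Finset.range (r.natDegree + 1),
      Polynomial.derivative (Polynomial.C (r.coeff k / (k + 1)) * Polynomial.X ^ (k + 1))
        = Polynomial.C (r.coeff k) * Polynomial.X ^ k := by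
    intro k _
    rw [Polynomial.derivative_C_mul, Polynomial.derivative_X_pow]
    rw [← mul_assoc, ← Polynomial.C_mul]
    congr 2
    · push_cast
      rw [div_mul_cancel₀]
      positivity
  rw [Finset.sum_congr rfl h]
  simp_rw [Polynomial.C_mul_X_pow_eq_monomial]
  exact (Polynomial.as_sum_range' r _ (Nat.lt_succ_self _)).symm

lemma natDegree_antider_le (r : Polynomial ℝ) : (antider r).natDegree ≤ r.natDegree + 1 := by
  refine Polynomial.natDegree_sum_le_of_forall_le _ _ fun k hk => ?_
  refine (Polynomial.natDegree_C_mul_le _ _).trans ?_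
  simp only [Polynomial.natDegree_X_pow]
  exact Nat.succ_le_succ (Nat.lt_succ_iff.mp (Finset.mem_range.mp hk))

noncomputable def lw {d : ℕ} (w : Fin d → ℝ) : MvPolynomial (Fin d) ℝ :=
  ∑ j, MvPolynomial.C (w j) * MvPolynomial.X j

lemma aeval_lw {d : ℕ} (w x : Fin d → ℝ) : aeval x (lw w) = ∑ j, w j * x j := by
  simp [lw]

lemma eval_lw {d : ℕ} (w x : Fin d → ℝ) : eval x (lw w) = ∑ j, w j * x j := by
  simp [lw]

lemma pderiv_lw {d : ℕ} (w : Fin d → ℝ) (l : Fin d) :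
    pderiv l (lw w) = MvPolynomial.C (w l) := by
  classical
  rw [lw, map_sum]
  rw [Finset.sum_eq_single l]
  · simp
  · intro b _ hb
    simp [pderiv_X_of_ne hb]
  · simp

lemma totalDegree_lw {d : ℕ} (w : Fin d → ℝ) : (lw w).totalDegree ≤ 1 := by
  refine (totalDegree_finset_sum _ _).trans ?_
  refine Finset.sup_le fun j _ => ?_
  refine (totalDegree_mul _ _).trans ?_
  simp [totalDegree_X]

lemma totalDegree_comp_le {d : ℕ} (w : Fin d → ℝ) (q : Polynomial ℝ) :
    (Polynomial.aeval (lw w) q).totalDegree ≤ q.natDegree := by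
  rw [Polynomial.aeval_eq_sum_range]
  refine (totalDegree_finset_sum _ _).trans ?_
  refine Finset.sup_le fun k hk => ?_
  refine (totalDegree_smul_le _ _).trans ?_
  refine (totalDegree_pow _ _).trans ?_
  calc k * (lw w).totalDegree ≤ k * 1 := Nat.mul_le_mul_left k (totalDegree_lw w)
    _ ≤ q.natDegree := by
        rw [mul_one]; exact Nat.lt_succ_iff.mp (Finset.mem_range.mp hk)

lemma pderiv_comp {d : ℕ} (w : Fin d → ℝ) (q : Polynomial ℝ) (l : Fin d) :
    pderiv l (Polynomial.aeval (lw w) q) =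
      Polynomial.aeval (lw w) (Polynomial.derivative q) * MvPolynomial.C (w l) := by
  rw [Derivation.map_aeval, pderiv_lw, smul_eq_mul]

lemma aeval_comp {d : ℕ} (w x : Fin d → ℝ) (q : Polynomial ℝ) :
    aeval x (Polynomial.aeval (lw w) q) = Polynomial.eval (∑ j, w j * x j) q := by
  rw [← Polynomial.aeval_algHom_apply, aeval_lw, Polynomial.coe_aeval_eq_eval]

end Helpers

/-- The incomplete Hermite matrix at distinct points `z₁, …, z_{D'}`, whose rows are indexed
by pairs `(i, l)` and whose entry in row `(i, l)` and column `α` (for `|α| ≤ D⁺`) is the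
`l`-th component of the gradient `∇p_α(z_i)`, has rank equal to the number `d·D'` of its rows
(i.e., its rows are linearly independent), provided `D⁺ ≥ D'`. -/
theorem stmt3 (d D' Dplus : ℕ) (hD : D' ≤ Dplus)
    (z : Fin D' → (Fin d → ℝ)) (hz : Function.Injective z) :
    LinearIndependent ℝ (fun p : Fin D' × Fin d =>
      fun α : {α : Fin d → ℕ // (∑ j, α j) ≤ Dplus} =>
        fderiv ℝ (pMon α.1) (z p.1) (Pi.single p.2 1)) := by
  classical
  rw [Fintype.linearIndependent_iff]
  intro c hc
  have H : ∀ m : Fin d →₀ ℕ, (∑ j, m j) ≤ Dplus →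
      ∑ p : Fin D' × Fin d, c p * fderiv ℝ (pMon ⇑m) (z p.1) (Pi.single p.2 1) = 0 := by
    intro m hm
    have := congrFun hc ⟨⇑m, hm⟩
    simpa using this
  set L : MvPolynomial (Fin d) ℝ →ₗ[ℝ] ℝ :=
    ∑ p : Fin D' × Fin d, c p •
      (((MvPolynomial.aeval (z p.1)).toLinearMap).comp (pderiv p.2).toLinearMap) with hLdef
  have hLapply : ∀ P : MvPolynomial (Fin d) ℝ,
      L P = ∑ p : Fin D' × Fin d, c p * aeval (z p.1) (pderiv p.2 P) := by
    intro P
    simp [hLdef]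
  have hLmono : ∀ m : Fin d →₀ ℕ, (∑ j, m j) ≤ Dplus → ∀ r : ℝ, L (monomial m r) = 0 := by
    intro m hm r
    have h1 : (monomial m r : MvPolynomial (Fin d) ℝ) = r • monomial m 1 := by
      rw [smul_monomial, smul_eq_mul, mul_one]
    rw [h1, map_smul, hLapply, smul_eq_mul]
    rw [Finset.sum_congr rfl fun p _ => by rw [aeval_pderiv_monomial]]
    rw [H m hm, mul_zero]
  have hL : ∀ P : MvPolynomial (Fin d) ℝ, P.totalDegree ≤ Dplus → L P = 0 := by
    intro P hP
    conv_lhs => rw [← P.support_sum_monomial_coeff]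
    rw [map_sum]
    refine Finset.sum_eq_zero fun m hm => ?_
    refine hLmono m ?_ _
    have h1 := MvPolynomial.le_totalDegree hm
    have h2 : (m.sum fun _ e => e) = ∑ j, m j :=
      Finsupp.sum_fintype _ _ (fun _ => rfl)
    rw [← h2]
    exact h1.trans hP
  have key : ∀ i₀ : Fin D', ∀ w : Fin d → ℝ,
      (∀ i j : Fin D', i ≠ j → (∑ l, w l * z i l) ≠ (∑ l, w l * z j l)) →
      ∑ l, c (i₀, l) * w l = 0 := by
    intro i₀ w hw
    set t : Fin D' → ℝ := fun i => ∑ l, w l * z i l with ht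
    have hinj : Set.InjOn t (Finset.univ : Finset (Fin D')) := by
      intro a _ b _ hab
      by_contra h
      exact hw a b h hab
    set r := Lagrange.basis Finset.univ t i₀ with hr
    set q := antider r with hq
    have hdeg : (Polynomial.aeval (lw w) q).totalDegree ≤ Dplus := by
      refine (totalDegree_comp_le w q).trans ?_
      refine (natDegree_antider_le r).trans ?_
      rw [hr, Lagrange.natDegree_basis hinj (Finset.mem_univ i₀), Finset.card_univ,
        Fintype.card_fin]
      have hpos : 0 < D' := i₀.pos
      omega
    have h0 := hL _ hdeg
    rw [hLapply] at h0
    have hterm : ∀ p : Fin D' × Fin d,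
        c p * aeval (z p.1) (pderiv p.2 (Polynomial.aeval (lw w) q)) =
          if p.1 = i₀ then c p * w p.2 else 0 := by
      intro p
      rw [pderiv_comp, map_mul, aeval_comp, MvPolynomial.aeval_C, hq, derivative_antider]
      have hfold : (∑ j, w j * z p.1 j) = t p.1 := rfl
      rw [hfold]
      rcases eq_or_ne p.1 i₀ with h | h
      · rw [if_pos h, h, Lagrange.eval_basis_self hinj (Finset.mem_univ i₀)]
        simp
      · rw [if_neg h, Lagrange.eval_basis_of_ne (fun he => h he.symm) (Finset.mem_univ p.1)]
        simp
    rw [Finset.sum_congr rfl fun p _ => hterm p] at h0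
    rw [Fintype.sum_prod_type] at h0
    rw [Finset.sum_eq_single i₀] at h0
    · simpa using h0
    · intro b _ hb
      refine Finset.sum_eq_zero fun l _ => ?_
      rw [if_neg hb]
    · intro h
      exact absurd (Finset.mem_univ i₀) h
  intro p
  obtain ⟨i₀, l₀⟩ := p
  by_contra hc0
  set Φ : MvPolynomial (Fin d) ℝ := lw (fun l => c (i₀, l)) with hΦdef
  set S : Finset (Fin D' × Fin D') := Finset.univ.offDiag with hSdef
  set Ψ : MvPolynomial (Fin d) ℝ := ∏ pr ∈ S, lw (z pr.1 - z pr.2) with hΨdef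
  have hΦ : Φ ≠ 0 := by
    intro h
    have := congrArg (eval (Pi.single l₀ 1)) h
    rw [hΦdef, eval_lw, map_zero] at this
    rw [Finset.sum_eq_single l₀] at this
    · simp at this
      exact hc0 this
    · intro b _ hb
      simp [Pi.single_apply, hb]
    · simp
  have hΨ : Ψ ≠ 0 := by
    rw [hΨdef]
    rw [Finset.prod_ne_zero_iff]
    intro pr hpr
    have hne : z pr.1 ≠ z pr.2 := by
      intro h
      exact (Finset.mem_offDiag.mp hpr).2.2 (hz h)
    obtain ⟨l, hl⟩ := Function.ne_iff.mp hne
    intro h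
    have := congrArg (eval (Pi.single l 1)) h
    rw [eval_lw, map_zero] at this
    rw [Finset.sum_eq_single l] at this
    · simp at this
      exact hl (sub_eq_zero.mp this)
    · intro b _ hb
      simp [Pi.single_apply, hb]
    · simp
  have hmul : Φ * Ψ ≠ 0 := mul_ne_zero hΦ hΨ
  have hex : ∃ w : Fin d → ℝ, eval w (Φ * Ψ) ≠ 0 := by
    by_contra h
    push_neg at h
    apply hmul
    apply MvPolynomial.funext (q := 0)
    intro x
    rw [map_zero]
    exact h x
  obtain ⟨w, hw⟩ := hex
  rw [map_mul] at hw
  have hwΦ : eval w Φ ≠ 0 := fun h => hw (by rw [h, zero_mul])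
  have hwΨ : eval w Ψ ≠ 0 := fun h => hw (by rw [h, mul_zero])
  rw [hΨdef, map_prod] at hwΨ
  have hwfac : ∀ pr ∈ S, eval w (lw (z pr.1 - z pr.2)) ≠ 0 :=
    Finset.prod_ne_zero_iff.mp hwΨ
  have hdist : ∀ i j : Fin D', i ≠ j → (∑ l, w l * z i l) ≠ (∑ l, w l * z j l) := by
    intro i j hij heq
    have hmem : (i, j) ∈ S := by
      rw [hSdef, Finset.mem_offDiag]
      exact ⟨Finset.mem_univ _, Finset.mem_univ _, hij⟩
    apply hwfac (i, j) hmem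
    rw [eval_lw]
    have : ∀ l, (z i - z j) l * w l = w l * z i l - w l * z j l := by
      intro l
      simp [Pi.sub_apply]
      ring
    rw [Finset.sum_congr rfl fun l _ => this l, Finset.sum_sub_distrib, heq, sub_self]
  have := key i₀ w hdist
  apply hwΦ
  rw [hΦdef, eval_lw]
  exact this
end

section
/- Let M be an m × D' circulant matrix whose first row is (1, 0^{j₁}, −1, 0^{j₂}), i.e., it has 1 in the first column, −1 in column j₁ + 2, and zeros elsewhere, where j₁ + j₂ = D' − 2, and whose each subsequent row is obtained from the previous row by a cyclic shift one position to the right. If m ≤ ⌈D'/2⌉, then the rank of M is equal to m. -/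
/-- An `m × D'` circulant matrix whose first row is `(1, 0^{j₁}, −1, 0^{j₂})`
(with `j₁ + j₂ + 2 = D'`), each subsequent row being the cyclic shift of the previous
one by one position to the right, has rank `m` provided `m ≤ ⌈D'/2⌉`. -/
theorem stmt5 (m D' j₁ j₂ : ℕ) (hD : j₁ + j₂ + 2 = D') (hm : m ≤ (D' + 1) / 2)
    (M : Matrix (Fin m) (Fin D') ℝ)
    (hM : ∀ (k : Fin m) (j : Fin D'), M k j =
      if (j.val + D' - k.val) % D' = 0 then 1
      else if (j.val + D' - k.val) % D' = j₁ + 1 then -1 else 0) :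
    M.rank = m := by
  have hmD : m ≤ D' := by omega
  set f : Fin m → Fin D' := Fin.castLE hmD with hf
  set N : Matrix (Fin m) (Fin m) ℝ := M.submatrix id f with hN
  -- key mod computation
  have key : ∀ j k : ℕ, k < D' → j < D' →
      (j + D' - k) % D' = if k ≤ j then j - k else j + D' - k := by
    intro j k hk hj
    split
    · rw [show j + D' - k = (j - k) + D' by omega, Nat.add_mod_right]
      exact Nat.mod_eq_of_lt (by omega)
    · exact Nat.mod_eq_of_lt (by omega)
  have hNentry : ∀ k j : Fin m, N k j =
      if (j : ℕ) = k then 1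
      else if (j : ℕ) = k + (j₁ + 1) then -1
      else if (k : ℕ) = j + (j₂ + 1) then -1 else 0 := by
    intro k j
    have hk : (k : ℕ) < D' := lt_of_lt_of_le k.isLt hmD
    have hj : (j : ℕ) < D' := lt_of_lt_of_le j.isLt hmD
    have : N k j = M k (f j) := rfl
    rw [this, hM]
    simp only [hf, Fin.coe_castLE]
    rw [key _ _ hk hj]
    rcases le_or_gt (k : ℕ) (j : ℕ) with h | h
    · rw [if_pos h]
      split_ifs <;> first | rfl | (exfalso; omega)
    · rw [if_neg (not_le.mpr h)]
      split_ifs <;> first | rfl | (exfalso; omega)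
  -- determinant of N is 1
  have hdiag : ∀ k : Fin m, N k k = 1 := by
    intro k; rw [hNentry]; simp
  have hdet : N.det = 1 := by
    rcases le_or_gt m (j₁ + 1) with h1 | h1
    · -- lower triangular
      have htri : N.BlockTriangular OrderDual.toDual := by
        intro i j hij
        have hij' : (i : ℕ) < j := hij
        rw [hNentry]
        split_ifs <;> first | omega | rfl
      rw [Matrix.det_of_lowerTriangular N htri]
      simp [hdiag]
    · -- upper triangular (j₂ + 1 ≥ m)
      have h2 : m ≤ j₂ + 1 := by omega
      have htri : N.BlockTriangular id := by
        intro i j hij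
        have hij' : (j : ℕ) < i := hij
        have hjm : (j : ℕ) < m := j.isLt
        have him : (i : ℕ) < m := i.isLt
        rw [hNentry]
        split_ifs <;> first | omega | rfl
      rw [Matrix.det_of_upperTriangular htri]
      simp [hdiag]
  have hunit : IsUnit N := by
    rw [Matrix.isUnit_iff_isUnit_det, hdet]
    exact isUnit_one
  have hrankN : N.rank = m := by
    rw [Matrix.rank_of_isUnit N hunit, Fintype.card_fin]
  have hle : N.rank ≤ M.rank := by
    have : N = M * (1 : Matrix (Fin D') (Fin D') ℝ).submatrix (Equiv.refl (Fin D')) f := by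
      rw [Matrix.mul_submatrix_one]
      rfl
    rw [this]
    exact Matrix.rank_mul_le_left _ _
  have hge : M.rank ≤ m := by
    simpa using M.rank_le_card_height
  omega
end

section
/- Let K ⊂ ℝ^n be compact and suppose there is a constant C_K such that for every ε > 0 the set K × K can be covered by at most C_K/ε^{2d} balls of radius ε (so K has box-counting dimension at most d in the relevant sense). Parametrize linear maps from ℝ^n to ℝ^D by their entries: for c ∈ ℝ^{nD}, let F_c(x) = Cx where C is the D×n matrix with entries given by c. If D > 2d, then for every a₀ > 0, the set of c ∈ ℝ^{nD} for which F_c restricted to K is injective has probability 1 relative to the ball {c : ‖c‖ ≤ a₀}. -/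
/-!
Fix a unit vector `u`. Rotating every row of a matrix `C` so that `u` becomes a basis vector
is an isometry of the space of matrices, and turns `{C | ‖C u‖ ≤ ρ, ‖C‖ ≤ a}` into a subset of
a box, so this slab has volume `O(ρ ^ D)`.

If `‖C‖ ≤ a` and `C x = C y` with `x, y ∈ K`, `‖x - y‖ ≥ δ`, and `(x, y)` lies in the
`ε`-ball around `t` from the cover of `K × K`, then `C` maps the unit vector along
`t.1 - t.2` to a vector of length at most `4 a ε / δ`. Summing the slab volumes over the
`C_K / ε ^ (2 d)` balls bounds the volume of such `C` by `O(ε ^ (D - 2 d))`, which tends to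
`0` since `D > 2 d`. The non-injective matrices are the countable union of these sets over
`δ = 1 / (k + 1)`.
-/

open MeasureTheory Metric Filter Topology

lemma measure_eq_zero_of_le_mul_pow {α : Type*} [MeasurableSpace α] {μ : Measure α} {s : Set α}
    {C ε₀ : ℝ} {m : ℕ} (hm : m ≠ 0) (hε₀ : 0 < ε₀)
    (h : ∀ ε, 0 < ε → ε ≤ ε₀ → μ s ≤ ENNReal.ofReal (C * ε ^ m)) : μ s = 0 := by
  have hlim : Tendsto (fun ε : ℝ => ENNReal.ofReal (C * ε ^ m)) (𝓝[>] 0) (𝓝 0) := by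
    have : Tendsto (fun ε : ℝ => C * ε ^ m) (𝓝 0) (𝓝 (C * 0 ^ m)) :=
      (continuous_const.mul (continuous_pow m)).tendsto 0
    rw [zero_pow hm, mul_zero] at this
    simpa using (ENNReal.tendsto_ofReal this).mono_left nhdsWithin_le_nhds
  exact le_antisymm (ge_of_tendsto hlim (mem_of_superset (Ioc_mem_nhdsGT hε₀)
    fun ε hε => h ε hε.1 hε.2)) bot_le

lemma EuclideanSpace.volume_setOf_forall_abs_le {ι : Type*} [Fintype ι] (b : ι → ℝ) :
    volume {x : EuclideanSpace ℝ ι | ∀ i, |x i| ≤ b i} = ∏ i, ENNReal.ofReal (2 * b i) := by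
  have hbox : {x : EuclideanSpace ℝ ι | ∀ i, |x i| ≤ b i} =
      (MeasurableEquiv.toLp 2 (ι → ℝ)).symm ⁻¹' Set.univ.pi fun i => Set.Icc (-b i) (b i) := by
    ext x
    simp only [Set.mem_ofPred_eq, Set.mem_preimage, Set.mem_univ_pi, Set.mem_Icc, abs_le]
    rfl
  rw [hbox, (EuclideanSpace.volume_preserving_symm_measurableEquiv_toLp ι).measure_preimage
    (MeasurableSet.univ_pi fun _ => measurableSet_Icc).nullMeasurableSet, volume_pi_pi]
  simp [Real.volume_Icc, two_mul]

lemma OrthonormalBasis.exists_apply_eq_of_norm_eq_one {κ E : Type*} [Fintype κ]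
    [NormedAddCommGroup E] [InnerProductSpace ℝ E] [FiniteDimensional ℝ E]
    (hcard : Module.finrank ℝ E = Fintype.card κ) {u : E} (hu : ‖u‖ = 1) (j₀ : κ) :
    ∃ B : OrthonormalBasis κ ℝ E, B j₀ = u := by
  have hu' : Orthonormal ℝ (({j₀} : Set κ).domRestrict fun _ => u) := by
    rw [orthonormal_iff_ite]
    rintro ⟨i, rfl⟩ ⟨j, rfl⟩
    simp [Set.domRestrict, hu]
  obtain ⟨B, hB⟩ := hu'.exists_orthonormalBasis_extension_of_card_eq hcard
  exact ⟨B, hB j₀ rfl⟩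

lemma Fintype.prod_ite_eq_mul_pow {κ M : Type*} [Fintype κ] [DecidableEq κ] [CommMonoid M]
    (j₀ : κ) (x y : M) : ∏ j, (if j = j₀ then x else y) = x * y ^ (Fintype.card κ - 1) := by
  rw [Fintype.prod_eq_mul_prod_compl j₀, if_pos rfl, Finset.prod_congr rfl fun j hj =>
      if_neg (Finset.mem_compl.1 hj ∘ Finset.mem_singleton.2), Finset.prod_const,
    Finset.card_compl, Finset.card_singleton]

namespace MatrixEmbedding

variable {ι κ : Type*} [Fintype ι] [Fintype κ]

/-- The rows of `c`, read as the matrix with entries `c (i, j)`. -/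
noncomputable def rows : EuclideanSpace ℝ (ι × κ) ≃ₗᵢ[ℝ] PiLp 2 (fun _ : ι => EuclideanSpace ℝ κ) :=
  (LinearIsometryEquiv.piLpCongrLeft 2 ℝ ℝ (Equiv.sigmaEquivProd ι κ).symm).trans
    (LinearIsometryEquiv.piLpCurry ℝ 2 fun _ _ => ℝ)

@[simp]
lemma rows_apply_apply (c : EuclideanSpace ℝ (ι × κ)) (i : ι) (j : κ) : rows c i j = c (i, j) :=
  rfl

noncomputable def matrixMap (c : EuclideanSpace ℝ (ι × κ)) :
    EuclideanSpace ℝ κ →ₗ[ℝ] EuclideanSpace ℝ ι :=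
  (WithLp.linearEquiv 2 ℝ (ι → ℝ)).symm.toLinearMap ∘ₗ LinearMap.pi fun i => innerₛₗ ℝ (rows c i)

lemma matrixMap_apply_apply (c : EuclideanSpace ℝ (ι × κ)) (x : EuclideanSpace ℝ κ) (i : ι) :
    matrixMap c x i = inner ℝ (rows c i) x :=
  rfl

lemma ofLp_matrixMap (c : EuclideanSpace ℝ (ι × κ)) (x : EuclideanSpace ℝ κ) :
    (matrixMap c x).ofLp = fun i => ∑ j, c (i, j) * x j := by
  ext i
  simp [matrixMap_apply_apply, PiLp.inner_apply, mul_comm]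

lemma norm_matrixMap_le (c : EuclideanSpace ℝ (ι × κ)) (x : EuclideanSpace ℝ κ) :
    ‖matrixMap c x‖ ≤ ‖c‖ * ‖x‖ := by
  refine le_of_sq_le_sq ?_ (by positivity)
  calc ‖matrixMap c x‖ ^ 2 = ∑ i, inner ℝ (rows c i) x ^ 2 := by
        simp [EuclideanSpace.norm_sq_eq, matrixMap_apply_apply]
    _ ≤ ∑ i, ‖rows c i‖ ^ 2 * ‖x‖ ^ 2 := by
        gcongr with i
        rw [← mul_pow, ← sq_abs]
        gcongr
        exact abs_real_inner_le_norm _ _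
    _ = (‖c‖ * ‖x‖) ^ 2 := by
        rw [← Finset.sum_mul, ← PiLp.norm_sq_eq_of_L2, LinearIsometryEquiv.norm_map, mul_pow]

noncomputable def rowsRepr (B : OrthonormalBasis κ ℝ (EuclideanSpace ℝ κ)) :
    EuclideanSpace ℝ (ι × κ) ≃ₗᵢ[ℝ] EuclideanSpace ℝ (ι × κ) :=
  rows.trans ((LinearIsometryEquiv.piLpCongrRight 2 fun _ => B.repr).trans rows.symm)

lemma rowsRepr_apply (B : OrthonormalBasis κ ℝ (EuclideanSpace ℝ κ))
    (c : EuclideanSpace ℝ (ι × κ)) (i : ι) (j : κ) :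
    rowsRepr B c (i, j) = matrixMap c (B j) i := by
  rw [matrixMap_apply_apply, real_inner_comm, ← B.repr_apply_apply]
  rfl

def slab (u : EuclideanSpace ℝ κ) (ρ a : ℝ) : Set (EuclideanSpace ℝ (ι × κ)) :=
  {c | ‖matrixMap c u‖ ≤ ρ ∧ ‖c‖ ≤ a}

lemma volume_slab_le {u : EuclideanSpace ℝ κ} (hu : ‖u‖ = 1) (ρ a : ℝ) :
    volume (slab (ι := ι) u ρ a) ≤ ENNReal.ofReal (2 * ρ) ^ Fintype.card ι *
      ENNReal.ofReal (2 * a) ^ (Fintype.card ι * (Fintype.card κ - 1)) := by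
  classical
  obtain ⟨j₀⟩ : Nonempty κ := by
    by_contra h
    rw [not_nonempty_iff] at h
    simp [Subsingleton.elim u 0] at hu
  obtain ⟨B, hB⟩ := OrthonormalBasis.exists_apply_eq_of_norm_eq_one (by simp) hu j₀
  let b : ι × κ → ℝ := fun p => if p.2 = j₀ then ρ else a
  have hsub : slab u ρ a ⊆ rowsRepr B ⁻¹' {c | ∀ p, |c p| ≤ b p} := by
    rintro c ⟨hρ, ha⟩ ⟨i, j⟩
    simp only [b]
    split_ifs with hj
    · rw [rowsRepr_apply, hj, hB]
      exact (PiLp.norm_apply_le _ i).trans hρ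
    · exact (PiLp.norm_apply_le (rowsRepr B c) (i, j)).trans ((rowsRepr B).norm_map c ▸ ha)
  calc volume (slab u ρ a) ≤ volume (rowsRepr B ⁻¹' {c | ∀ p, |c p| ≤ b p}) := measure_mono hsub
    _ = ∏ p, ENNReal.ofReal (2 * b p) := by
        rw [← EuclideanSpace.volume_setOf_forall_abs_le]
        refine (rowsRepr (ι := ι) B).measurePreserving.measure_preimage ?_
        simp only [Set.ofPred_forall]
        exact .iInter fun p => nullMeasurableSet_le (by fun_prop) aemeasurable_const
    _ = _ := by
        simp only [b, Fintype.prod_prod_type, mul_ite, apply_ite ENNReal.ofReal,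
          Fintype.prod_ite_eq_mul_pow, Finset.prod_const, Finset.card_univ, mul_pow, pow_mul']

lemma norm_matrixMap_normalize_le (c : EuclideanSpace ℝ (ι × κ)) {w z : EuclideanSpace ℝ κ}
    (hz : matrixMap c z = 0) : ‖matrixMap c (‖w‖⁻¹ • w)‖ ≤ ‖c‖ * ‖w - z‖ / ‖w‖ := by
  rw [map_smul, norm_smul, norm_inv, norm_norm, inv_mul_eq_div]
  gcongr
  simpa [hz] using norm_matrixMap_le c (w - z)

def collisionSet (K : Set (EuclideanSpace ℝ κ)) (δ a : ℝ) : Set (EuclideanSpace ℝ (ι × κ)) :=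
  {c | (∃ x ∈ K, ∃ y ∈ K, δ ≤ dist x y ∧ matrixMap c x = matrixMap c y) ∧ ‖c‖ ≤ a}

lemma collisionSet_subset_iUnion_slab {K : Set (EuclideanSpace ℝ κ)}
    {T : Finset (EuclideanSpace ℝ κ × EuclideanSpace ℝ κ)} {ε δ a : ℝ}
    (hT : K ×ˢ K ⊆ ⋃ t ∈ T, ball t ε) (hεδ : 4 * ε ≤ δ) :
    collisionSet (ι := ι) K δ a ⊆
      ⋃ t ∈ T.filter (fun t => t.1 ≠ t.2),
        slab (‖t.1 - t.2‖⁻¹ • (t.1 - t.2)) (4 * a * ε / δ) a := by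
  rintro c ⟨⟨x, hx, y, hy, hxy, hcxy⟩, hca⟩
  obtain ⟨t, ht, hxyt⟩ := Set.mem_iUnion₂.1 (hT (Set.mk_mem_prod hx hy))
  rw [mem_ball, Prod.dist_eq, max_lt_iff] at hxyt
  have hε : 0 < ε := dist_nonneg.trans_lt hxyt.1
  have hclose : ‖(t.1 - t.2) - (x - y)‖ ≤ 2 * ε := by
    rw [sub_sub_sub_comm, two_mul]
    refine (norm_sub_le _ _).trans ?_
    rw [← dist_eq_norm, ← dist_eq_norm, dist_comm t.1, dist_comm t.2]
    exact add_le_add hxyt.1.le hxyt.2.le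
  have hfar : δ / 2 ≤ ‖t.1 - t.2‖ := by
    have := norm_sub_norm_le (x - y) ((x - y) - (t.1 - t.2))
    rw [dist_eq_norm] at hxy
    rw [sub_sub_cancel, norm_sub_rev (x - y)] at this
    linarith
  have hne : t.1 ≠ t.2 := fun h => by
    rw [h, sub_self, norm_zero] at hfar
    linarith
  refine Set.mem_iUnion₂.2 ⟨t, Finset.mem_filter.2 ⟨ht, hne⟩, ?_, hca⟩
  have hker : matrixMap c (x - y) = 0 := by rw [map_sub, hcxy, sub_self]
  calc ‖matrixMap c (‖t.1 - t.2‖⁻¹ • (t.1 - t.2))‖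
      ≤ ‖c‖ * ‖(t.1 - t.2) - (x - y)‖ / ‖t.1 - t.2‖ := norm_matrixMap_normalize_le c hker
    _ ≤ a * (2 * ε) / (δ / 2) := by
        have ha : 0 ≤ a := (norm_nonneg c).trans hca
        exact div_le_div₀ (by positivity) (mul_le_mul hca hclose (norm_nonneg _) ha)
          (by linarith) hfar
    _ = 4 * a * ε / δ := by ring

lemma volume_collisionSet_le {K : Set (EuclideanSpace ℝ κ)}
    {T : Finset (EuclideanSpace ℝ κ × EuclideanSpace ℝ κ)} {ε δ a : ℝ}
    (hT : K ×ˢ K ⊆ ⋃ t ∈ T, ball t ε) (hεδ : 4 * ε ≤ δ) :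
    volume (collisionSet (ι := ι) K δ a) ≤ T.card * (ENNReal.ofReal (2 * (4 * a * ε / δ)) ^
      Fintype.card ι * ENNReal.ofReal (2 * a) ^ (Fintype.card ι * (Fintype.card κ - 1))) :=
  calc volume (collisionSet (ι := ι) K δ a)
      ≤ ∑ t ∈ T.filter (fun t => t.1 ≠ t.2),
          volume (slab (ι := ι) (‖t.1 - t.2‖⁻¹ • (t.1 - t.2)) (4 * a * ε / δ) a) :=
        (measure_mono (collisionSet_subset_iUnion_slab hT hεδ)).trans
          (measure_biUnion_finset_le _ _)
    _ ≤ ∑ t ∈ T.filter (fun t => t.1 ≠ t.2), ENNReal.ofReal (2 * (4 * a * ε / δ)) ^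
          Fintype.card ι * ENNReal.ofReal (2 * a) ^ (Fintype.card ι * (Fintype.card κ - 1)) :=
        Finset.sum_le_sum fun t ht =>
          volume_slab_le (norm_smul_inv_norm (sub_ne_zero.2 (Finset.mem_filter.1 ht).2)) _ _
    _ ≤ _ := by
        rw [Finset.sum_const, nsmul_eq_mul]
        gcongr
        exact Finset.filter_subset _ _

lemma volume_collisionSet_eq_zero {K : Set (EuclideanSpace ℝ κ)} {d : ℕ} {C_K : ℝ}
    (hcov : ∀ ε : ℝ, 0 < ε →
      ∃ T : Finset (EuclideanSpace ℝ κ × EuclideanSpace ℝ κ),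
        (T.card : ℝ) ≤ C_K / ε ^ (2 * d) ∧ K ×ˢ K ⊆ ⋃ p ∈ T, ball p ε)
    (hD : 2 * d < Fintype.card ι) {δ a : ℝ} (hδ : 0 < δ) (ha : 0 ≤ a) :
    volume (collisionSet (ι := ι) K δ a) = 0 := by
  set D := Fintype.card ι
  set k := D * (Fintype.card κ - 1)
  refine measure_eq_zero_of_le_mul_pow (C := C_K * ((8 * a / δ) ^ D * (2 * a) ^ k))
    (Nat.sub_ne_zero_of_lt hD) (ε₀ := δ / 4) (by positivity) fun ε hε hεδ => ?_
  obtain ⟨T, hTcard, hT⟩ := hcov ε hε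
  have hCK : 0 ≤ C_K / ε ^ (2 * d) := (Nat.cast_nonneg _).trans hTcard
  calc volume (collisionSet K δ a)
      ≤ T.card * (ENNReal.ofReal (2 * (4 * a * ε / δ)) ^ D * ENNReal.ofReal (2 * a) ^ k) :=
        volume_collisionSet_le hT (by linarith)
    _ ≤ ENNReal.ofReal (C_K / ε ^ (2 * d)) *
          (ENNReal.ofReal ((2 * (4 * a * ε / δ)) ^ D) * ENNReal.ofReal ((2 * a) ^ k)) := by
        rw [ENNReal.ofReal_pow (by positivity), ENNReal.ofReal_pow (by positivity)]
        gcongr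
        exact (ENNReal.ofReal_natCast _).symm.trans_le (ENNReal.ofReal_le_ofReal hTcard)
    _ = ENNReal.ofReal (C_K * ((8 * a / δ) ^ D * (2 * a) ^ k) * ε ^ (D - 2 * d)) := by
        rw [← ENNReal.ofReal_mul (by positivity), ← ENNReal.ofReal_mul hCK,
          pow_sub₀ ε hε.ne' hD.le]
        congr 1
        field_simp
        ring

lemma closedBall_diff_setOf_injOn_subset (K : Set (EuclideanSpace ℝ κ)) (a : ℝ) :
    closedBall (0 : EuclideanSpace ℝ (ι × κ)) a \ {c | Set.InjOn (matrixMap c) K} ⊆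
      ⋃ k : ℕ, collisionSet K (1 / (k + 1)) a := by
  rintro c ⟨hc, hinj⟩
  simp only [Set.mem_ofPred_eq, Set.InjOn, not_forall] at hinj
  obtain ⟨x, hx, y, hy, hxy, hne⟩ := hinj
  obtain ⟨k, hk⟩ := exists_nat_one_div_lt (dist_pos.2 hne)
  exact Set.mem_iUnion.2 ⟨k, ⟨x, hx, y, hy, hk.le, hxy⟩, mem_closedBall_zero_iff.1 hc⟩

end MatrixEmbedding

open MatrixEmbedding in
theorem stmt6_general (n D d : ℕ) (K : Set (EuclideanSpace ℝ (Fin n)))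
    (C_K : ℝ)
    (hcov : ∀ ε : ℝ, 0 < ε →
      ∃ T : Finset (EuclideanSpace ℝ (Fin n) × EuclideanSpace ℝ (Fin n)),
        (T.card : ℝ) ≤ C_K / ε ^ (2 * d) ∧ K ×ˢ K ⊆ ⋃ p ∈ T, ball p ε)
    (hD : 2 * d < D) (a₀ : ℝ) (ha₀ : 0 < a₀) :
    volume ({c : EuclideanSpace ℝ (Fin D × Fin n) |
        Set.InjOn (fun x : EuclideanSpace ℝ (Fin n) =>
          fun i : Fin D => ∑ j, c (i, j) * x j) K} ∩ closedBall 0 a₀)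
      / volume (closedBall (0 : EuclideanSpace ℝ (Fin D × Fin n)) a₀) = 1 := by
  have hnull : volume (closedBall (0 : EuclideanSpace ℝ (Fin D × Fin n)) a₀ \
      {c | Set.InjOn (matrixMap c) K}) = 0 :=
    measure_mono_null (closedBall_diff_setOf_injOn_subset K a₀)
      (measure_iUnion_null fun k => volume_collisionSet_eq_zero hcov (by simpa using hD)
        Nat.one_div_pos_of_nat ha₀.le)
  rw [Set.inter_comm,
    measure_inter_conull' (measure_mono_null (Set.sdiff_subset_sdiff_right ?_) hnull),
    ENNReal.div_self (measure_closedBall_pos volume 0 ha₀).ne' measure_closedBall_lt_top.ne]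
  intro c hc
  simpa only [Set.mem_ofPred_eq, Function.comp_def, ofLp_matrixMap] using
    (WithLp.ofLp_injective 2).comp_injOn hc

/-- Prevalent Whitney-type embedding for linear maps. If `K ⊂ ℝⁿ` is compact and `K × K`
can be covered by `C_K/ε^{2d}` balls of radius `ε` for every `ε > 0`, and `D > 2d`, then
for almost every `D × n` matrix `C` (viewed as `c ∈ ℝ^{nD}`), relative to any ball
`‖c‖ ≤ a₀`, the linear map `x ↦ Cx` is injective on `K`. -/
theorem stmt6 (n D d : ℕ) (K : Set (EuclideanSpace ℝ (Fin n))) (hK : IsCompact K)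
    (C_K : ℝ)
    (hcov : ∀ ε : ℝ, 0 < ε →
      ∃ T : Finset (EuclideanSpace ℝ (Fin n) × EuclideanSpace ℝ (Fin n)),
        (T.card : ℝ) ≤ C_K / ε ^ (2 * d) ∧ K ×ˢ K ⊆ ⋃ p ∈ T, ball p ε)
    (hD : 2 * d < D) (a₀ : ℝ) (ha₀ : 0 < a₀) :
    volume ({c : EuclideanSpace ℝ (Fin D × Fin n) |
        Set.InjOn (fun x : EuclideanSpace ℝ (Fin n) =>
          fun i : Fin D => ∑ j, c (i, j) * x j) K} ∩ closedBall 0 a₀)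
      / volume (closedBall (0 : EuclideanSpace ℝ (Fin D × Fin n)) a₀) = 1 :=
  stmt6_general n D d K C_K hcov hD a₀ ha₀
end

section
/- Let x₁, …, x_{D−1} be distinct points in ℝ^d, let v₁, …, v_{D−1} ∈ ℝ^d be nonzero vectors, and let a_{j,k} ∈ ℝ and b_{j,k} ∈ ℝ^d (1 ≤ k < j ≤ D−1) be arbitrary. Then the (D−1) × |I_{2D−1}| matrix whose j-th row has entries v_jᵀ∇p_α(x_j) + Σ_{k<j} ( a_{j,k} p_α(x_k) + b_{j,k}ᵀ∇p_α(x_k) ), for α ranging over I_{2D−1}, has rank equal to D−1 (the number of its rows). In particular, the matrix H(x₁, v₁) arising from the first-order expansion in c of the derivative of the delay map of the perturbed system φ_c(x) = φ(x) + e₁·Σ_{α∈I_{2D−1}} c_α p_α(x) has rank D−1 whenever x₁, …, x_{D−1} are distinct. -/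
open MvPolynomial Finset

section Triangular

variable {K ι M A : Type*} [CommRing K] [IsDomain K] [Fintype ι] [LinearOrder ι]
  [AddCommGroup M] [Module K M]

theorem linearIndependent_apply_of_triangular (ℓ : ι → M →ₗ[K] K) (e : A → M) (q : ι → M)
    (hq : ∀ j, q j ∈ Submodule.span K (Set.range e))
    (h_lt : ∀ i j, i < j → ℓ i (q j) = 0) (h_diag : ∀ j, ℓ j (q j) ≠ 0) :
    LinearIndependent K (fun j α => ℓ j (e α)) := by
  classical
  rw [Fintype.linearIndependent_iff]
  intro c hc
  let Λ : M →ₗ[K] K := ∑ i, c i • ℓ i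
  have hΛe : Set.range e ⊆ LinearMap.ker Λ := by
    rintro _ ⟨α, rfl⟩
    simpa [Λ] using congrFun hc α
  let T : Matrix ι ι K := Matrix.of fun i j => ℓ i (q j)
  have hT : T.det ≠ 0 := by
    rw [Matrix.det_of_isLowerTriangular T fun i j hij => h_lt i j hij]
    exact prod_ne_zero_iff.mpr fun j _ => h_diag j
  refine congrFun (Matrix.eq_zero_of_vecMul_eq_zero hT (funext fun j => ?_))
  simpa [Matrix.vecMul, dotProduct, Λ, T, mul_comm] using Submodule.span_le.mpr hΛe (hq j)

end Triangular

section RowFunctional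

variable {E ι : Type*} [NormedAddCommGroup E] [NormedSpace ℝ E] [Fintype ι] [LinearOrder ι]
  (x v : ι → E) (a : ι → ι → ℝ) (b : ι → ι → E) (j : ι)

noncomputable def rowFunctional (f : E → ℝ) : ℝ :=
  fderiv ℝ f (x j) (v j) +
    ∑ k ∈ univ.filter (fun k => k < j), (a j k * f (x k) + fderiv ℝ f (x k) (b j k))

variable {x v a b j}

theorem rowFunctional_add {f g : E → ℝ} (hf : Differentiable ℝ f) (hg : Differentiable ℝ g) :
    rowFunctional x v a b j (f + g) = rowFunctional x v a b j f + rowFunctional x v a b j g := by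
  simp only [rowFunctional, fderiv_add (hf _) (hg _), add_apply, Pi.add_apply]
  rw [add_add_add_comm, ← sum_add_distrib]
  congr 1
  exact sum_congr rfl fun k _ => by ring

theorem rowFunctional_smul {f : E → ℝ} (r : ℝ) (hf : Differentiable ℝ f) :
    rowFunctional x v a b j (r • f) = r * rowFunctional x v a b j f := by
  simp only [rowFunctional, fderiv_const_smul (hf _), smul_apply,
    Pi.smul_apply, smul_eq_mul, mul_add, mul_sum]
  congr 1
  exact sum_congr rfl fun k _ => by ring

theorem rowFunctional_eq_fderiv {f : E → ℝ}
    (hf : ∀ k < j, f (x k) = 0 ∧ HasFDerivAt f (0 : E →L[ℝ] ℝ) (x k)) :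
    rowFunctional x v a b j f = fderiv ℝ f (x j) (v j) := by
  rw [rowFunctional, add_eq_left]
  refine sum_eq_zero fun k hk => ?_
  obtain ⟨hfk, hf'k⟩ := hf k (mem_filter.mp hk).2
  simp [hfk, hf'k.fderiv]

theorem rowFunctional_eq_zero {f : E → ℝ}
    (hf : ∀ k ≤ j, f (x k) = 0 ∧ HasFDerivAt f (0 : E →L[ℝ] ℝ) (x k)) :
    rowFunctional x v a b j f = 0 := by
  rw [rowFunctional_eq_fderiv fun k hk => hf k hk.le, (hf j le_rfl).2.fderiv,
    zero_apply]

end RowFunctional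

section Polynomial

variable {σ : Type*} [Fintype σ]

theorem MvPolynomial.differentiable_eval (p : MvPolynomial σ ℝ) :
    Differentiable ℝ fun z : σ → ℝ => eval z p := fun z =>
  (AnalyticAt.aeval_mvPolynomial (f := fun z : σ → ℝ => z)
    (fun i => (ContinuousLinearMap.proj i : (σ → ℝ) →L[ℝ] ℝ).analyticAt z) p).differentiableAt

noncomputable def affineForm (w y : σ → ℝ) : MvPolynomial σ ℝ := ∑ i, C (w i) * (X i - C (y i))

noncomputable def sqDist (y : σ → ℝ) : MvPolynomial σ ℝ := ∑ i, (X i - C (y i)) ^ 2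

theorem totalDegree_affineForm_le (w y : σ → ℝ) : (affineForm w y).totalDegree ≤ 1 :=
  totalDegree_finsetSum_le fun i _ => (totalDegree_mul _ _).trans <| by
    rw [totalDegree_C, zero_add]
    exact (totalDegree_sub_C_le _ _).trans (totalDegree_X i).le

theorem totalDegree_sqDist_le (y : σ → ℝ) : (sqDist y).totalDegree ≤ 2 :=
  totalDegree_finsetSum_le fun i _ => (totalDegree_pow _ _).trans <| by
    have := (totalDegree_sub_C_le (X i : MvPolynomial σ ℝ) (y i)).trans (totalDegree_X i).le
    omega

theorem eval_affineForm (w y z : σ → ℝ) : eval z (affineForm w y) = w ⬝ᵥ (z - y) := by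
  simp [affineForm, dotProduct]

theorem eval_sqDist (y z : σ → ℝ) : eval z (sqDist y) = (z - y) ⬝ᵥ (z - y) := by
  simp [sqDist, dotProduct, sq]

theorem hasFDerivAt_eval_affineForm (w y z : σ → ℝ) :
    HasFDerivAt (fun z => eval z (affineForm w y))
      (∑ i, w i • (ContinuousLinearMap.proj i : (σ → ℝ) →L[ℝ] ℝ)) z := by
  simp only [affineForm, map_sum, map_mul, map_sub, eval_C, eval_X]
  exact HasFDerivAt.fun_sum fun i _ =>
    ((hasFDerivAt_apply (𝕜 := ℝ) i z).sub_const (y i)).const_mul (w i)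

theorem hasFDerivAt_eval_sqDist (y : σ → ℝ) :
    HasFDerivAt (fun z => eval z (sqDist y)) (0 : (σ → ℝ) →L[ℝ] ℝ) y := by
  simp only [sqDist, map_sum, map_pow, map_sub, eval_C, eval_X]
  simpa using HasFDerivAt.fun_sum fun i (_ : i ∈ univ) =>
    ((hasFDerivAt_apply (𝕜 := ℝ) i y).sub_const (y i)).pow 2

theorem eval_sqDist_mul_eq_zero_and_hasFDerivAt (y : σ → ℝ) (r : MvPolynomial σ ℝ) :
    eval y (sqDist y * r) = 0 ∧
      HasFDerivAt (fun z => eval z (sqDist y * r)) (0 : (σ → ℝ) →L[ℝ] ℝ) y := by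
  have hy : eval y (sqDist y) = 0 := by simp [eval_sqDist]
  refine ⟨by simp [hy], ?_⟩
  simp only [map_mul]
  simpa [hy] using (hasFDerivAt_eval_sqDist y).fun_mul (differentiable_eval r y).hasFDerivAt

theorem fderiv_eval_affineForm_mul (w y u : σ → ℝ) (r : MvPolynomial σ ℝ) :
    fderiv ℝ (fun z => eval z (affineForm w y * r)) y u = eval y r * w ⬝ᵥ u := by
  have hy : eval y (affineForm w y) = 0 := by simp [eval_affineForm]
  simp only [map_mul]
  rw [((hasFDerivAt_eval_affineForm w y y).fun_mul (differentiable_eval r y).hasFDerivAt).fderiv]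
  simp [hy, dotProduct]

end Polynomial

section TestPolynomial

variable {σ ι : Type*} [Fintype σ] [Fintype ι] [LinearOrder ι] {x : ι → σ → ℝ} {j : ι}

noncomputable def testPoly (x v : ι → σ → ℝ) (j : ι) : MvPolynomial σ ℝ :=
  affineForm (v j) (x j) * ∏ k ∈ univ.filter (fun k => k < j), sqDist (x k)

theorem totalDegree_testPoly_le (x v : ι → σ → ℝ) (j : ι) :
    (testPoly x v j).totalDegree ≤ 2 * Fintype.card ι - 1 := by
  have hcard : #(univ.filter fun k => k < j) < Fintype.card ι :=
    card_lt_univ_of_notMem (x := j) (by simp)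
  have hprod : (∏ k ∈ univ.filter (fun k => k < j), sqDist (x k)).totalDegree ≤
      2 * #(univ.filter fun k => k < j) :=
    (totalDegree_finsetProd _ _).trans <| by
      simpa [mul_comm] using sum_le_sum fun k (_ : k ∈ univ.filter fun k => k < j) =>
        totalDegree_sqDist_le (x k)
  have := (totalDegree_mul (affineForm (v j) (x j)) _).trans
    (add_le_add (totalDegree_affineForm_le (v j) (x j)) hprod)
  rw [testPoly]
  omega

theorem eval_testPoly_eq_zero_and_hasFDerivAt (v : ι → σ → ℝ) {k : ι} (hk : k < j) :
    eval (x k) (testPoly x v j) = 0 ∧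
      HasFDerivAt (fun z => eval z (testPoly x v j)) (0 : (σ → ℝ) →L[ℝ] ℝ) (x k) := by
  have hfactor : testPoly x v j = sqDist (x k) *
      (affineForm (v j) (x j) * ∏ l ∈ (univ.filter fun l => l < j).erase k, sqDist (x l)) := by
    rw [testPoly, ← mul_prod_erase _ _ (mem_filter.mpr ⟨mem_univ k, hk⟩)]
    ring
  rw [hfactor]
  exact eval_sqDist_mul_eq_zero_and_hasFDerivAt _ _

theorem fderiv_eval_testPoly_ne_zero (hx : Function.Injective x) {v : ι → σ → ℝ}
    (hv : v j ≠ 0) : fderiv ℝ (fun z => eval z (testPoly x v j)) (x j) (v j) ≠ 0 := by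
  rw [testPoly, fderiv_eval_affineForm_mul]
  simp only [map_prod, eval_sqDist]
  refine mul_ne_zero (prod_ne_zero_iff.mpr fun k hk => ?_) (dotProduct_self_eq_zero.not.mpr hv)
  exact dotProduct_self_eq_zero.not.mpr (sub_ne_zero.mpr (hx.ne (mem_filter.mp hk).2.ne'))

end TestPolynomial

section PolynomialRows

variable {σ ι : Type*} [Fintype σ] [Fintype ι] [LinearOrder ι]

@[simps]
noncomputable def polyRowFunctional (x v : ι → σ → ℝ) (a : ι → ι → ℝ) (b : ι → ι → σ → ℝ)
    (j : ι) : MvPolynomial σ ℝ →ₗ[ℝ] ℝ where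
  toFun p := rowFunctional x v a b j fun z => eval z p
  map_add' p q := by
    simp only [map_add]
    exact rowFunctional_add (differentiable_eval p) (differentiable_eval q)
  map_smul' r p := by
    simp only [smul_eval, RingHom.id_apply]
    exact rowFunctional_smul r (differentiable_eval p)

theorem mem_span_monomial_of_totalDegree_le {N : ℕ} {p : MvPolynomial σ ℝ}
    (hp : p.totalDegree ≤ N) :
    p ∈ Submodule.span ℝ (Set.range fun α : {α : σ → ℕ // ∑ i, α i ≤ N} =>
      monomial (Finsupp.equivFunOnFinite.symm α.1) (1 : ℝ)) := by
  rw [← mem_restrictTotalDegree, restrictTotalDegree, restrictSupport_eq_span] at hp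
  refine Submodule.span_mono ?_ hp
  rintro _ ⟨s, hs, rfl⟩
  exact ⟨⟨s, by simpa [Finsupp.sum_fintype] using hs⟩, by simp⟩

end PolynomialRows

theorem eval_monomial_equivFunOnFinite_symm {d : ℕ} (α : Fin d → ℕ) (z : Fin d → ℝ) :
    eval z (monomial (Finsupp.equivFunOnFinite.symm α) (1 : ℝ)) = pMon α z := by
  simp [eval_monomial, pMon, Finsupp.prod_fintype]

/-- The `(D-1) × |I_{2D-1}|` matrix whose `j`-th row has entries
`v_jᵀ∇p_α(x_j) + ∑_{k<j} (a_{j,k} p_α(x_k) + b_{j,k}ᵀ∇p_α(x_k))` (for `α` with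
`|α| ≤ 2D - 1`) has rank `D - 1` (its rows are linearly independent), whenever
`x₁, …, x_{D-1}` are distinct and `v₁, …, v_{D-1}` are nonzero. Here `vᵀ∇p_α(x)` is the
directional derivative of `p_α` at `x` along `v`. In particular, the matrix `H(x₁, v₁)`
from the first-order expansion of the derivative of the perturbed delay map has rank
`D - 1`. -/
theorem stmt11 (d D : ℕ) (x : Fin (D - 1) → (Fin d → ℝ)) (hx : Function.Injective x)
    (v : Fin (D - 1) → (Fin d → ℝ)) (hv : ∀ j, v j ≠ 0)
    (a : Fin (D - 1) → Fin (D - 1) → ℝ)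
    (b : Fin (D - 1) → Fin (D - 1) → (Fin d → ℝ)) :
    LinearIndependent ℝ (fun j : Fin (D - 1) =>
      fun α : {α : Fin d → ℕ // (∑ i, α i) ≤ 2 * D - 1} =>
        fderiv ℝ (pMon α.1) (x j) (v j) +
          ∑ k ∈ Finset.univ.filter (fun k : Fin (D - 1) => k < j),
            (a j k * pMon α.1 (x k) + fderiv ℝ (pMon α.1) (x k) (b j k))) := by
  have hdeg (j : Fin (D - 1)) : (testPoly x v j).totalDegree ≤ 2 * D - 1 := by
    have := totalDegree_testPoly_le x v j
    rw [Fintype.card_fin] at this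
    omega
  have hindep := linearIndependent_apply_of_triangular (polyRowFunctional x v a b)
    (fun α : {α : Fin d → ℕ // ∑ i, α i ≤ 2 * D - 1} =>
      monomial (Finsupp.equivFunOnFinite.symm α.1) (1 : ℝ))
    (testPoly x v) (fun j => mem_span_monomial_of_totalDegree_le (hdeg j))
    (fun i j hij => rowFunctional_eq_zero fun k hk =>
      eval_testPoly_eq_zero_and_hasFDerivAt v (hk.trans_lt hij))
    (fun j => by
      rw [polyRowFunctional_apply,
        rowFunctional_eq_fderiv fun k hk => eval_testPoly_eq_zero_and_hasFDerivAt v hk]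
      exact fderiv_eval_testPoly_ne_zero hx (hv j))
  simpa only [polyRowFunctional_apply, eval_monomial_equivFunOnFinite_symm, rowFunctional]
    using hindep
end
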